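/- arXiv:2511.04276 — 12 statements merged into one kernel-verified Lean document; each statement's English description precedes it below -/
import Mathlib

section
/- Let S, P : ℝ → ℝ be differentiable functions satisfying, for all t ≥ 0, S'(t) = v_c·μ_v·S(t)·(1 − S(t)/(v_c·K)) − β_v·v_c·S(t)·P(t) and P'(t) = α·β_v·v_c·S(t)·P(t) − δ·P(t), with initial conditions S(0) > 0 and P(0) > 0. Then S(t) > 0 and P(t) > 0 for all t ≥ 0. -/
/-- Positivity for a scalar linear ODE `f' = f * a` with continuous coefficient. -/
lemma pos_of_linODE (f a : ℝ → ℝ) (hf : Differentiable ℝ f) (ha : Continuous a)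
    (hderiv : ∀ t ≥ (0:ℝ), deriv f t = f t * a t) (h0 : 0 < f 0) :
    ∀ t ≥ (0:ℝ), 0 < f t := by
  intro t ht
  set A : ℝ → ℝ := fun u => ∫ s in (0:ℝ)..u, a s with hAdef
  have hA : ∀ u : ℝ, HasDerivAt A (a u) u := by
    intro u
    exact intervalIntegral.integral_hasDerivAt_right
      (ha.intervalIntegrable _ _) (ha.stronglyMeasurableAtFilter _ _) ha.continuousAt
  set g : ℝ → ℝ := fun u => f u * Real.exp (-A u) with hgdef
  have hg : ∀ u : ℝ, HasDerivAt g
      (deriv f u * Real.exp (-A u) + f u * (Real.exp (-A u) * (-(a u)))) u := by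
    intro u
    exact ((hf u).hasDerivAt).mul ((hA u).neg.exp)
  have hg0 : ∀ u ∈ Set.Ico (0:ℝ) t, HasDerivWithinAt g 0 (Set.Ici u) u := by
    intro u hu
    have h := (hg u).hasDerivWithinAt (s := Set.Ici u)
    have heq : deriv f u * Real.exp (-A u) + f u * (Real.exp (-A u) * (-(a u))) = 0 := by
      rw [hderiv u hu.1]; ring
    rwa [heq] at h
  have hcont : ContinuousOn g (Set.Icc 0 t) := by
    have hAd : Differentiable ℝ A := fun u => (hA u).differentiableAt
    exact (hf.continuous.mul (Real.continuous_exp.comp hAd.continuous.neg)).continuousOn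
  have hconst := constant_of_has_deriv_right_zero hcont hg0 t ⟨ht, le_refl t⟩
  have hA0 : A 0 = 0 := intervalIntegral.integral_same
  have hg0v : g 0 = f 0 := by simp [hgdef, hA0]
  have h1 : f t * Real.exp (-A t) = f 0 := by rw [← hg0v]; exact hconst
  have h2 := Real.exp_pos (-A t)
  nlinarith

/-- Positivity of solutions of the Type I vector–pathogen model. -/
theorem typeI_positivity (μv βv K vc α δ : ℝ)
    (hμ : 0 < μv) (hβ : 0 < βv) (hK : 0 < K) (hv : 0 < vc) (hα : 0 < α) (hδ : 0 < δ)
    (S P : ℝ → ℝ) (hS : Differentiable ℝ S) (hP : Differentiable ℝ P)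
    (hS' : ∀ t ≥ (0:ℝ),
      deriv S t = vc * μv * S t * (1 - S t / (vc * K)) - βv * vc * S t * P t)
    (hP' : ∀ t ≥ (0:ℝ),
      deriv P t = α * βv * vc * S t * P t - δ * P t)
    (hS0 : 0 < S 0) (hP0 : 0 < P 0) :
    ∀ t ≥ (0:ℝ), 0 < S t ∧ 0 < P t := by
  have hSpos : ∀ t ≥ (0:ℝ), 0 < S t := by
    apply pos_of_linODE S (fun u => vc * μv * (1 - S u / (vc * K)) - βv * vc * P u) hS
    · exact (continuous_const.mul (continuous_const.sub
        (hS.continuous.div_const _))).sub (continuous_const.mul hP.continuous)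
    · intro u hu; rw [hS' u hu]; ring
    · exact hS0
  have hPpos : ∀ t ≥ (0:ℝ), 0 < P t := by
    apply pos_of_linODE P (fun u => α * βv * vc * S u - δ) hP
    · exact (continuous_const.mul hS.continuous).sub continuous_const
    · intro u hu; rw [hP' u hu]; ring
    · exact hP0
  exact fun t ht => ⟨hSpos t ht, hPpos t ht⟩
end

section
/- Assume α > δ·E_p. The point (S*, P*) with S* = √δ/√(β_v·v_c·(α − δ·E_p)) and P* = α·μ_v·(K·v_c·√(β_v·v_c·(α − δ·E_p)) − √δ)/(K·β_v·v_c·(α − δ·E_p)·√δ) is an equilibrium of the Type III model: both v_c·μ_v·S*·(1 − S*/(v_c·K)) − β_v·v_c·S*²·P*/(1 + β_v·v_c·E_p·S*²) = 0 and α·β_v·v_c·S*²·P*/(1 + β_v·v_c·E_p·S*²) − δ·P* = 0. -/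
/-!
The endemic density is chosen so that `S*² · βv vc (α - δ Ep) = δ`; this makes the Type III
functional response `βv vc S² / (1 + βv vc Ep S²)` equal to `δ / α`, so the pathogen equation
balances for every `P`, and `P*` is the value for which infection balances logistic vector growth.
-/

namespace TypeIII

theorem sq_sqrt_div_sqrt_mul {a b : ℝ} (ha : 0 ≤ a) (hb : 0 < b) :
    (Real.sqrt a / Real.sqrt b) ^ 2 * b = a := by
  rw [div_pow, Real.sq_sqrt ha, Real.sq_sqrt hb.le, div_mul_cancel₀ a hb.ne']

theorem response_eq_div {βv vc Ep α δ S : ℝ} (hα : α ≠ 0) (hαδ : α - δ * Ep ≠ 0)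
    (hS : S ^ 2 * (βv * vc * (α - δ * Ep)) = δ) :
    βv * vc * S ^ 2 / (1 + βv * vc * Ep * S ^ 2) = δ / α := by
  have hD : (1 + βv * vc * Ep * S ^ 2) * (α - δ * Ep) = α := by linear_combination Ep * hS
  have hD0 : 1 + βv * vc * Ep * S ^ 2 ≠ 0 := left_ne_zero_of_mul (hD ▸ hα)
  rw [div_eq_div_iff hD0 hα]
  refine mul_right_cancel₀ hαδ ?_
  linear_combination α * hS - δ * hD

theorem logistic_eq_div_mul_endemic {μv βv K vc α δ Ep s b : ℝ} (hK : K ≠ 0) (hv : vc ≠ 0)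
    (hα : α ≠ 0) (hs0 : s ≠ 0) (hb0 : b ≠ 0) (hs : s ^ 2 = δ)
    (hb : b ^ 2 = βv * vc * (α - δ * Ep)) :
    vc * μv * (s / b) * (1 - s / b / (vc * K)) =
      δ / α * (α * μv * (K * vc * b - s) / (K * βv * vc * (α - δ * Ep) * s)) := by
  rw [show K * βv * vc * (α - δ * Ep) = K * b ^ 2 by rw [hb]; ring, ← hs]
  field_simp

end TypeIII

open TypeIII in
theorem typeIII_endemic_equilibrium_general (μv βv Ep K vc α δ : ℝ)
    (hβ : 0 < βv) (hK : 0 < K) (hv : 0 < vc)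
    (hα : 0 < α) (hδ : 0 < δ) (hαδ : δ * Ep < α)
    (Sstar Pstar : ℝ)
    (hSstar : Sstar = Real.sqrt δ / Real.sqrt (βv * vc * (α - δ * Ep)))
    (hPstar : Pstar = α * μv * (K * vc * Real.sqrt (βv * vc * (α - δ * Ep)) - Real.sqrt δ) /
      (K * βv * vc * (α - δ * Ep) * Real.sqrt δ)) :
    vc * μv * Sstar * (1 - Sstar / (vc * K)) -
      βv * vc * Sstar ^ 2 * Pstar / (1 + βv * vc * Ep * Sstar ^ 2) = 0 ∧
    α * βv * vc * Sstar ^ 2 * Pstar / (1 + βv * vc * Ep * Sstar ^ 2) - δ * Pstar = 0 := by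
  have hB : 0 < βv * vc * (α - δ * Ep) := mul_pos (mul_pos hβ hv) (sub_pos.mpr hαδ)
  have hS : Sstar ^ 2 * (βv * vc * (α - δ * Ep)) = δ :=
    hSstar ▸ sq_sqrt_div_sqrt_mul hδ.le hB
  have hf := response_eq_div hα.ne' (sub_pos.mpr hαδ).ne' hS
  constructor
  · rw [sub_eq_zero, mul_div_right_comm, hf, hSstar, hPstar]
    exact logistic_eq_div_mul_endemic hK.ne' hv.ne' hα.ne' (Real.sqrt_pos.mpr hδ).ne'
      (Real.sqrt_pos.mpr hB).ne' (Real.sq_sqrt hδ.le) (Real.sq_sqrt hB.le)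
  · calc α * βv * vc * Sstar ^ 2 * Pstar / (1 + βv * vc * Ep * Sstar ^ 2) - δ * Pstar
        = α * (βv * vc * Sstar ^ 2 / (1 + βv * vc * Ep * Sstar ^ 2)) * Pstar - δ * Pstar := by
          ring
      _ = 0 := by rw [hf, mul_div_cancel₀ δ hα.ne', sub_self]

/-- The endemic point of the Type III model is an equilibrium. -/
theorem typeIII_endemic_equilibrium (μv βv Ep K vc α δ : ℝ)
    (hμ : 0 < μv) (hβ : 0 < βv) (hE : 0 < Ep) (hK : 0 < K) (hv : 0 < vc)
    (hα : 0 < α) (hδ : 0 < δ) (hαδ : δ * Ep < α)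
    (Sstar Pstar : ℝ)
    (hSstar : Sstar = Real.sqrt δ / Real.sqrt (βv * vc * (α - δ * Ep)))
    (hPstar : Pstar = α * μv * (K * vc * Real.sqrt (βv * vc * (α - δ * Ep)) - Real.sqrt δ) /
      (K * βv * vc * (α - δ * Ep) * Real.sqrt δ)) :
    vc * μv * Sstar * (1 - Sstar / (vc * K)) -
      βv * vc * Sstar ^ 2 * Pstar / (1 + βv * vc * Ep * Sstar ^ 2) = 0 ∧
    α * βv * vc * Sstar ^ 2 * Pstar / (1 + βv * vc * Ep * Sstar ^ 2) - δ * Pstar = 0 :=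
  typeIII_endemic_equilibrium_general μv βv Ep K vc α δ hβ hK hv hα hδ hαδ Sstar Pstar hSstar hPstar
end

section
/- The Jacobian matrix of the Type I vector field at the disease-free equilibrium (v_c·K, 0) is the upper-triangular matrix with diagonal entries −μ_v·v_c and α·β_v·v_c²·K − δ, and it satisfies trace < 0 and determinant > 0 if and only if v_c² < δ/(K·α·β_v). -/
/-- Jacobian matrix of the Type I vector field at the point `(s, p)`. -/
noncomputable def jacI (μv βv K vc α δ : ℝ) (s p : ℝ) : Matrix (Fin 2) (Fin 2) ℝ :=
  !![deriv (fun x => vc * μv * x * (1 - x / (vc * K)) - βv * vc * x * p) s,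
     deriv (fun y => vc * μv * s * (1 - s / (vc * K)) - βv * vc * s * y) p;
     deriv (fun x => α * βv * vc * x * p - δ * p) s,
     deriv (fun y => α * βv * vc * s * y - δ * y) p]

/-! At the disease-free equilibrium the Jacobian is upper triangular and the logistic term makes
its first diagonal entry `-μv·vc` negative, so `trace < 0 ∧ det > 0` reduces to negativity of the
second diagonal entry `α·βv·vc²·K - δ`. -/

theorem Matrix.trace_neg_and_det_pos_iff_of_upperTriangular {R : Type*} [CommRing R]
    [LinearOrder R] [IsStrictOrderedRing R] {A : Matrix (Fin 2) (Fin 2) R} (hA : A 1 0 = 0)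
    (h₀ : A 0 0 < 0) :
    A.trace < 0 ∧ 0 < A.det ↔ A 1 1 < 0 := by
  rw [Matrix.trace_fin_two, Matrix.det_fin_two, hA, mul_zero, sub_zero]
  refine ⟨fun ⟨_, hdet⟩ => neg_of_mul_pos_right hdet h₀.le, fun h₁ =>
    ⟨by linarith, mul_pos_of_neg_of_neg h₀ h₁⟩⟩

theorem jacI_eq (μv βv K vc α δ s p : ℝ) :
    jacI μv βv K vc α δ s p =
      !![vc * μv * (1 - 2 * s / (vc * K)) - βv * vc * p, -(βv * vc * s);
         α * βv * vc * p, α * βv * vc * s - δ] := by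
  have h₀₀ := (((hasDerivAt_id s).const_mul (vc * μv)).fun_mul
      (((hasDerivAt_id s).div_const (vc * K)).const_sub 1)).fun_sub
      (((hasDerivAt_id s).const_mul (βv * vc)).mul_const p)
  have h₀₁ := ((hasDerivAt_id p).const_mul (βv * vc * s)).const_sub
      (vc * μv * s * (1 - s / (vc * K)))
  have h₁₀ := (((hasDerivAt_id s).const_mul (α * βv * vc)).mul_const p).sub_const (δ * p)
  have h₁₁ := ((hasDerivAt_id p).const_mul (α * βv * vc * s)).fun_sub
      ((hasDerivAt_id p).const_mul δ)
  simp only [id, mul_one] at h₀₀ h₀₁ h₁₀ h₁₁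
  rw [jacI, h₀₀.deriv, h₀₁.deriv, h₁₀.deriv, h₁₁.deriv]
  congr 3
  ring

theorem jacI_disease_free (μv βv K vc α δ : ℝ) (hvK : vc * K ≠ 0) :
    jacI μv βv K vc α δ (vc * K) 0 =
      !![-(μv * vc), -(βv * vc * (vc * K)); 0, α * βv * vc ^ 2 * K - δ] := by
  rw [jacI_eq, mul_div_assoc, div_self hvK]
  ext i j
  fin_cases i <;> fin_cases j <;>
    simp only [Fin.zero_eta, Fin.mk_one, Matrix.of_apply, Matrix.cons_val', Matrix.cons_val_zero,
      Matrix.cons_val_one, Matrix.cons_val_fin_one] <;> ring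

theorem typeI_disease_free_stability_general (μv βv K vc α δ : ℝ)
    (hμ : 0 < μv) (hβ : 0 < βv) (hK : 0 < K) (hv : 0 < vc) (hα : 0 < α) :
    jacI μv βv K vc α δ (vc * K) 0 1 0 = 0 ∧
    jacI μv βv K vc α δ (vc * K) 0 0 0 = -(μv * vc) ∧
    jacI μv βv K vc α δ (vc * K) 0 1 1 = α * βv * vc ^ 2 * K - δ ∧
    ((jacI μv βv K vc α δ (vc * K) 0).trace < 0 ∧
        0 < (jacI μv βv K vc α δ (vc * K) 0).det ↔
      vc ^ 2 < δ / (K * α * βv)) := by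
  rw [jacI_disease_free μv βv K vc α δ (by positivity)]
  refine ⟨rfl, rfl, rfl, ?_⟩
  rw [Matrix.trace_neg_and_det_pos_iff_of_upperTriangular rfl (neg_neg_of_pos (mul_pos hμ hv))]
  show α * βv * vc ^ 2 * K - δ < 0 ↔ _
  rw [lt_div_iff₀ (by positivity)]
  constructor <;> intro h <;> linarith

/-- The Type I Jacobian at the disease-free equilibrium `(vc·K, 0)` is
upper triangular with diagonal entries `−μv·vc` and `α·βv·vc²·K − δ`, and it satisfies
trace < 0 and det > 0 iff `vc² < δ/(K·α·βv)`. -/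
theorem typeI_disease_free_stability (μv βv K vc α δ : ℝ)
    (hμ : 0 < μv) (hβ : 0 < βv) (hK : 0 < K) (hv : 0 < vc) (hα : 0 < α) (hδ : 0 < δ) :
    jacI μv βv K vc α δ (vc * K) 0 1 0 = 0 ∧
    jacI μv βv K vc α δ (vc * K) 0 0 0 = -(μv * vc) ∧
    jacI μv βv K vc α δ (vc * K) 0 1 1 = α * βv * vc ^ 2 * K - δ ∧
    ((jacI μv βv K vc α δ (vc * K) 0).trace < 0 ∧
        0 < (jacI μv βv K vc α δ (vc * K) 0).det ↔
      vc ^ 2 < δ / (K * α * βv)) :=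
  typeI_disease_free_stability_general μv βv K vc α δ hμ hβ hK hv hα
end

section
/- The Jacobian matrix of the Type II vector field at the disease-free equilibrium (v_c·K, 0) is upper triangular with diagonal entries −μ_v·v_c and α·β_v·v_c²·K/(1 + β_v·v_c²·E_p·K) − δ, and it satisfies trace < 0 and determinant > 0 if and only if β_v·K·v_c²·(α − δ·E_p) < δ. -/
/-- Jacobian matrix of the Type II vector field at the point `(s, p)`. -/
noncomputable def jacII (μv βv Ep K vc α δ : ℝ) (s p : ℝ) : Matrix (Fin 2) (Fin 2) ℝ :=
  !![deriv (fun x => vc * μv * x * (1 - x / (vc * K)) -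
        βv * vc * x * p / (1 + βv * vc * Ep * x)) s,
     deriv (fun y => vc * μv * s * (1 - s / (vc * K)) -
        βv * vc * s * y / (1 + βv * vc * Ep * s)) p;
     deriv (fun x => α * βv * vc * x * p / (1 + βv * vc * Ep * x) - δ * p) s,
     deriv (fun y => α * βv * vc * s * y / (1 + βv * vc * Ep * s) - δ * y) p]

/-- The Type II Jacobian at the disease-free equilibrium `(vc·K, 0)` is
upper triangular with diagonal entries `−μv·vc` and
`α·βv·vc²·K/(1 + βv·vc²·Ep·K) − δ`, and it satisfies trace < 0 and det > 0 iff
`βv·K·vc²·(α − δ·Ep) < δ`. -/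
theorem typeII_disease_free_stability (μv βv Ep K vc α δ : ℝ)
    (hμ : 0 < μv) (hβ : 0 < βv) (hE : 0 < Ep) (hK : 0 < K) (hv : 0 < vc)
    (hα : 0 < α) (hδ : 0 < δ) :
    jacII μv βv Ep K vc α δ (vc * K) 0 1 0 = 0 ∧
    jacII μv βv Ep K vc α δ (vc * K) 0 0 0 = -(μv * vc) ∧
    jacII μv βv Ep K vc α δ (vc * K) 0 1 1 =
      α * βv * vc ^ 2 * K / (1 + βv * vc ^ 2 * Ep * K) - δ ∧
    ((jacII μv βv Ep K vc α δ (vc * K) 0).trace < 0 ∧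
        0 < (jacII μv βv Ep K vc α δ (vc * K) 0).det ↔
      βv * K * vc ^ 2 * (α - δ * Ep) < δ) := by
  have hvK : (0:ℝ) < vc * K := mul_pos hv hK
  have hvK' : vc * K ≠ 0 := ne_of_gt hvK
  have hc : (0:ℝ) < 1 + βv * vc * Ep * (vc * K) := by positivity
  have hc2 : (0:ℝ) < 1 + βv * vc ^ 2 * Ep * K := by positivity
  -- entry (1,0)
  have e10 : jacII μv βv Ep K vc α δ (vc * K) 0 1 0 = 0 := by
    simp [jacII]
  -- entry (0,0)
  have e00 : jacII μv βv Ep K vc α δ (vc * K) 0 0 0 = -(μv * vc) := by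
    have h1 : HasDerivAt (fun x : ℝ => vc * μv * x * (1 - x / (vc * K)))
        (vc * μv * 1 * (1 - vc * K / (vc * K)) +
          vc * μv * (vc * K) * (-(1 / (vc * K)))) (vc * K) := by
      exact (((hasDerivAt_id (vc * K)).const_mul (vc * μv)).mul
        (((hasDerivAt_id (vc * K)).div_const (vc * K)).const_sub 1))
    have h1' : deriv (fun x : ℝ => vc * μv * x * (1 - x / (vc * K))) (vc * K)
        = -(μv * vc) := by
      rw [h1.deriv]
      field_simp
      ring
    simp only [jacII, Matrix.cons_val', Matrix.cons_val_zero, Matrix.empty_val',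
      Matrix.cons_val_fin_one, mul_zero, zero_div, sub_zero]
    exact h1'
  -- entry (1,1)
  have e11 : jacII μv βv Ep K vc α δ (vc * K) 0 1 1 =
      α * βv * vc ^ 2 * K / (1 + βv * vc ^ 2 * Ep * K) - δ := by
    have h2 : HasDerivAt (fun y : ℝ =>
        α * βv * vc * (vc * K) * y / (1 + βv * vc * Ep * (vc * K)) - δ * y)
        (α * βv * vc * (vc * K) * 1 / (1 + βv * vc * Ep * (vc * K)) - δ * 1) 0 := by
      exact (((hasDerivAt_id (0:ℝ)).const_mul (α * βv * vc * (vc * K))).div_const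
        (1 + βv * vc * Ep * (vc * K))).sub ((hasDerivAt_id (0:ℝ)).const_mul δ)
    have h2' : deriv (fun y : ℝ =>
        α * βv * vc * (vc * K) * y / (1 + βv * vc * Ep * (vc * K)) - δ * y) 0
        = α * βv * vc ^ 2 * K / (1 + βv * vc ^ 2 * Ep * K) - δ := by
      rw [h2.deriv]
      rw [mul_one, mul_one]
      congr 1
      rw [div_eq_div_iff (ne_of_gt hc) (ne_of_gt hc2)]
      ring
    simpa [jacII] using h2'
  refine ⟨e10, e00, e11, ?_⟩
  -- trace and det
  have htr : (jacII μv βv Ep K vc α δ (vc * K) 0).trace =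
      -(μv * vc) + (α * βv * vc ^ 2 * K / (1 + βv * vc ^ 2 * Ep * K) - δ) := by
    rw [Matrix.trace_fin_two, e00, e11]
  have hdet : (jacII μv βv Ep K vc α δ (vc * K) 0).det =
      -(μv * vc) * (α * βv * vc ^ 2 * K / (1 + βv * vc ^ 2 * Ep * K) - δ) := by
    rw [Matrix.det_fin_two, e00, e11, e10, mul_zero, sub_zero]
  set d2 := α * βv * vc ^ 2 * K / (1 + βv * vc ^ 2 * Ep * K) - δ with hd2
  have key : d2 < 0 ↔ βv * K * vc ^ 2 * (α - δ * Ep) < δ := by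
    rw [hd2, sub_neg, div_lt_iff₀ hc2]
    constructor <;> intro h <;> nlinarith
  rw [htr, hdet]
  constructor
  · rintro ⟨_, hdpos⟩
    rw [← key]
    nlinarith [mul_pos hμ hv]
  · intro h
    have hd2neg : d2 < 0 := key.mpr h
    have hmv : 0 < μv * vc := mul_pos hμ hv
    constructor
    · linarith
    · nlinarith
end

section
/- The Jacobian matrix of the Type III vector field at the disease-free equilibrium (v_c·K, 0) is upper triangular with diagonal entries −μ_v·v_c and α·β_v·v_c³·K²/(1 + β_v·v_c³·E_p·K²) − δ, and it satisfies trace < 0 and determinant > 0 if and only if β_v·K²·v_c³·(α − δ·E_p) < δ. -/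
/-- Jacobian matrix of the Type III vector field at the point `(s, p)`. -/
noncomputable def jacIII (μv βv Ep K vc α δ : ℝ) (s p : ℝ) : Matrix (Fin 2) (Fin 2) ℝ :=
  !![deriv (fun x => vc * μv * x * (1 - x / (vc * K)) -
        βv * vc * x ^ 2 * p / (1 + βv * vc * Ep * x ^ 2)) s,
     deriv (fun y => vc * μv * s * (1 - s / (vc * K)) -
        βv * vc * s ^ 2 * y / (1 + βv * vc * Ep * s ^ 2)) p;
     deriv (fun x => α * βv * vc * x ^ 2 * p / (1 + βv * vc * Ep * x ^ 2) - δ * p) s,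
     deriv (fun y => α * βv * vc * s ^ 2 * y / (1 + βv * vc * Ep * s ^ 2) - δ * y) p]

/-- The Type III Jacobian at the disease-free equilibrium `(vc·K, 0)` is
upper triangular with diagonal entries `−μv·vc` and
`α·βv·vc³·K²/(1 + βv·vc³·Ep·K²) − δ`, and it satisfies trace < 0 and det > 0 iff
`βv·K²·vc³·(α − δ·Ep) < δ`. -/
theorem typeIII_disease_free_stability (μv βv Ep K vc α δ : ℝ)
    (hμ : 0 < μv) (hβ : 0 < βv) (hE : 0 < Ep) (hK : 0 < K) (hv : 0 < vc)
    (hα : 0 < α) (hδ : 0 < δ) :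
    jacIII μv βv Ep K vc α δ (vc * K) 0 1 0 = 0 ∧
    jacIII μv βv Ep K vc α δ (vc * K) 0 0 0 = -(μv * vc) ∧
    jacIII μv βv Ep K vc α δ (vc * K) 0 1 1 =
      α * βv * vc ^ 3 * K ^ 2 / (1 + βv * vc ^ 3 * Ep * K ^ 2) - δ ∧
    ((jacIII μv βv Ep K vc α δ (vc * K) 0).trace < 0 ∧
        0 < (jacIII μv βv Ep K vc α δ (vc * K) 0).det ↔
      βv * K ^ 2 * vc ^ 3 * (α - δ * Ep) < δ) := by
  have hvK : vc * K ≠ 0 := by positivity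
  have hD : (0:ℝ) < 1 + βv * vc ^ 3 * Ep * K ^ 2 := by positivity
  -- entry (1,0)
  have h10 : jacIII μv βv Ep K vc α δ (vc * K) 0 1 0 = 0 := by
    have hent : jacIII μv βv Ep K vc α δ (vc * K) 0 1 0 =
        deriv (fun x : ℝ => α * βv * vc * x ^ 2 * 0 / (1 + βv * vc * Ep * x ^ 2) - δ * 0)
          (vc * K) := by
      simp only [jacIII]; simp
    have hz : (fun x : ℝ => α * βv * vc * x ^ 2 * 0 / (1 + βv * vc * Ep * x ^ 2) - δ * 0)
        = fun _ : ℝ => (0:ℝ) := by funext x; simp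
    rw [hent, hz, deriv_const]
  -- entry (0,0)
  have h00 : jacIII μv βv Ep K vc α δ (vc * K) 0 0 0 = -(μv * vc) := by
    have heq : (fun x : ℝ => vc * μv * x * (1 - x / (vc * K)) -
        βv * vc * x ^ 2 * 0 / (1 + βv * vc * Ep * x ^ 2))
        = fun x : ℝ => vc * μv * x - μv / K * x ^ 2 := by
      funext x; field_simp; ring
    have hd : HasDerivAt (fun x : ℝ => vc * μv * x - μv / K * x ^ 2)
        (vc * μv * 1 - μv / K * (2 * (vc * K) ^ 1)) (vc * K) := by
      exact ((hasDerivAt_id (vc * K)).const_mul (vc * μv)).sub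
        ((hasDerivAt_pow 2 (vc * K)).const_mul (μv / K))
    have hent : jacIII μv βv Ep K vc α δ (vc * K) 0 0 0 =
        deriv (fun x : ℝ => vc * μv * x * (1 - x / (vc * K)) -
          βv * vc * x ^ 2 * 0 / (1 + βv * vc * Ep * x ^ 2)) (vc * K) := by
      simp only [jacIII]; simp
    rw [hent, heq, hd.deriv]
    field_simp; ring
  -- entry (1,1)
  have h11 : jacIII μv βv Ep K vc α δ (vc * K) 0 1 1 =
      α * βv * vc ^ 3 * K ^ 2 / (1 + βv * vc ^ 3 * Ep * K ^ 2) - δ := by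
    set s := vc * K with hs
    have heq : (fun y : ℝ => α * βv * vc * s ^ 2 * y / (1 + βv * vc * Ep * s ^ 2) - δ * y)
        = fun y : ℝ => (α * βv * vc * s ^ 2 / (1 + βv * vc * Ep * s ^ 2)) * y - δ * y := by
      funext y; ring
    have hd : HasDerivAt
        (fun y : ℝ => (α * βv * vc * s ^ 2 / (1 + βv * vc * Ep * s ^ 2)) * y - δ * y)
        ((α * βv * vc * s ^ 2 / (1 + βv * vc * Ep * s ^ 2)) * 1 - δ * 1) 0 := by
      exact ((hasDerivAt_id 0).const_mul _).sub ((hasDerivAt_id 0).const_mul δ)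
    have hent : jacIII μv βv Ep K vc α δ s 0 1 1 =
        deriv (fun y : ℝ => α * βv * vc * s ^ 2 * y / (1 + βv * vc * Ep * s ^ 2) - δ * y)
          0 := by
      simp only [jacIII]; simp
    rw [hent, heq, hd.deriv, hs]
    ring_nf
  refine ⟨h10, h00, h11, ?_⟩
  have htr : (jacIII μv βv Ep K vc α δ (vc * K) 0).trace =
      -(μv * vc) + (α * βv * vc ^ 3 * K ^ 2 / (1 + βv * vc ^ 3 * Ep * K ^ 2) - δ) := by
    rw [Matrix.trace_fin_two, h00, h11]
  have hdet : (jacIII μv βv Ep K vc α δ (vc * K) 0).det =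
      -(μv * vc) * (α * βv * vc ^ 3 * K ^ 2 / (1 + βv * vc ^ 3 * Ep * K ^ 2) - δ) := by
    rw [Matrix.det_fin_two, h00, h11, h10]; ring
  rw [htr, hdet]
  set A := α * βv * vc ^ 3 * K ^ 2 / (1 + βv * vc ^ 3 * Ep * K ^ 2) with hA
  have hkey : A < δ ↔ βv * K ^ 2 * vc ^ 3 * (α - δ * Ep) < δ := by
    rw [hA, div_lt_iff₀ hD]
    constructor <;> intro h <;> nlinarith
  constructor
  · rintro ⟨_, hd2⟩
    have : A - δ < 0 := by
      by_contra h
      push_neg at h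
      nlinarith [mul_nonneg (mul_pos hμ hv).le h]
    exact hkey.mp (by linarith)
  · intro h
    have hAδ : A < δ := hkey.mpr h
    constructor
    · nlinarith [mul_pos hμ hv]
    · nlinarith [mul_pos (mul_pos hμ hv) (show (0:ℝ) < δ - A by linarith)]
end

section
/- At the endemic equilibrium of the Type I model, (S*, P*) with S* = δ/(α·β_v·v_c) and P* = (μ_v/β_v)·(1 − δ/(α·β_v·v_c²·K)), the trace of the Jacobian matrix of the Type I vector field equals −δ·μ_v/(K·α·β_v·v_c), which is strictly negative. -/
lemma deriv_quad (a b c s : ℝ) :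
    deriv (fun x : ℝ => a * x - b * x ^ 2 - c * x) s = a - 2 * b * s - c := by
  have h : HasDerivAt (fun x : ℝ => a * x - b * x ^ 2 - c * x)
      (a * 1 - b * (2 * s ^ 1) - c * 1) s :=
    (((hasDerivAt_id s).const_mul a).sub ((hasDerivAt_pow 2 s).const_mul b)).sub
      ((hasDerivAt_id s).const_mul c)
  rw [h.deriv]; ring

lemma deriv_lin (a c p : ℝ) :
    deriv (fun y : ℝ => a * y - c * y) p = a - c := by
  have h : HasDerivAt (fun y : ℝ => a * y - c * y) (a * 1 - c * 1) p :=
    ((hasDerivAt_id p).const_mul a).sub ((hasDerivAt_id p).const_mul c)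
  rw [h.deriv]; ring

/-- At the Type I endemic equilibrium, the trace of the Jacobian equals
`−δ·μv/(K·α·βv·vc)`, which is strictly negative. -/
theorem typeI_endemic_trace (μv βv K vc α δ : ℝ)
    (hμ : 0 < μv) (hβ : 0 < βv) (hK : 0 < K) (hv : 0 < vc) (hα : 0 < α) (hδ : 0 < δ)
    (Sstar Pstar : ℝ)
    (hSstar : Sstar = δ / (α * βv * vc))
    (hPstar : Pstar = (μv / βv) * (1 - δ / (α * βv * vc ^ 2 * K))) :
    (jacI μv βv K vc α δ Sstar Pstar).trace = -(δ * μv / (K * α * βv * vc)) ∧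
    (jacI μv βv K vc α δ Sstar Pstar).trace < 0 := by
  have hvK : vc * K ≠ 0 := by positivity
  have h1 : deriv (fun x => vc * μv * x * (1 - x / (vc * K)) - βv * vc * x * Pstar) Sstar
      = vc * μv - 2 * (vc * μv / (vc * K)) * Sstar - βv * vc * Pstar := by
    have hfun : (fun x => vc * μv * x * (1 - x / (vc * K)) - βv * vc * x * Pstar)
        = fun x : ℝ => (vc * μv) * x - (vc * μv / (vc * K)) * x ^ 2 - (βv * vc * Pstar) * x := by
      funext x; field_simp
    rw [hfun, deriv_quad]
  have h4 : deriv (fun y => α * βv * vc * Sstar * y - δ * y) Pstar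
      = α * βv * vc * Sstar - δ := deriv_lin _ _ _
  have htr : (jacI μv βv K vc α δ Sstar Pstar).trace
      = -(δ * μv / (K * α * βv * vc)) := by
    rw [Matrix.trace]
    simp [jacI, Matrix.diag, Fin.sum_univ_two, h1, h4]
    rw [hSstar, hPstar]
    field_simp
    ring
  refine ⟨htr, ?_⟩
  rw [htr]
  have : 0 < δ * μv / (K * α * βv * vc) := by positivity
  linarith
end

section
/- At the endemic equilibrium of the Type I model, (S*, P*) with S* = δ/(α·β_v·v_c) and P* = (μ_v/β_v)·(1 − δ/(α·β_v·v_c²·K)), the determinant of the Jacobian matrix of the Type I vector field is strictly positive if and only if v_c² > δ/(α·K·β_v). Consequently (together with the trace being −δ·μ_v/(K·α·β_v·v_c) < 0), the endemic equilibrium is locally asymptotically stable precisely when v_c² > δ/(α·K·β_v). -/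
lemma deriv11' (μv βv K vc : ℝ) (p s : ℝ) :
    deriv (fun x => vc * μv * x * (1 - x / (vc * K)) - βv * vc * x * p) s =
      vc * μv * 1 * (1 - s / (vc * K)) + vc * μv * s * -(1 / (vc * K)) - βv * vc * 1 * p :=
  (((((hasDerivAt_id s).const_mul (vc * μv)).mul
      (((hasDerivAt_id s).div_const (vc * K)).const_sub 1)).sub
      (((hasDerivAt_id s).const_mul (βv * vc)).mul_const p))).deriv

lemma deriv12' (μv βv K vc : ℝ) (s p : ℝ) :
    deriv (fun y => vc * μv * s * (1 - s / (vc * K)) - βv * vc * s * y) p =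
      0 - βv * vc * s * 1 := by
  have h : HasDerivAt (fun y : ℝ => vc * μv * s * (1 - s / (vc * K)) - βv * vc * s * y)
      (0 - βv * vc * s * 1) p :=
    (hasDerivAt_const p _).sub ((hasDerivAt_id p).const_mul (βv * vc * s))
  simpa using h.deriv

lemma deriv21' (βv vc α δ : ℝ) (p s : ℝ) :
    deriv (fun x => α * βv * vc * x * p - δ * p) s = α * βv * vc * 1 * p := by
  have h : HasDerivAt (fun x : ℝ => α * βv * vc * x * p - δ * p)
      (α * βv * vc * 1 * p - 0) s :=
    (((hasDerivAt_id s).const_mul (α * βv * vc)).mul_const p).sub (hasDerivAt_const s _)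
  simpa using h.deriv

lemma deriv22' (βv vc α δ : ℝ) (s p : ℝ) :
    deriv (fun y => α * βv * vc * s * y - δ * y) p = α * βv * vc * s * 1 - δ * 1 := by
  have h : HasDerivAt (fun y : ℝ => α * βv * vc * s * y - δ * y)
      (α * βv * vc * s * 1 - δ * 1) p :=
    ((hasDerivAt_id p).const_mul (α * βv * vc * s)).sub ((hasDerivAt_id p).const_mul δ)
  simpa using h.deriv


/-- At the Type I endemic equilibrium, the determinant of the Jacobian is
strictly positive iff `vc² > δ/(α·K·βv)`; consequently, together with the trace being
`−δ·μv/(K·α·βv·vc) < 0`, the endemic equilibrium is locally asymptotically stable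
(trace < 0 and det > 0) precisely when `vc² > δ/(α·K·βv)`. -/
theorem typeI_endemic_det_stability (μv βv K vc α δ : ℝ)
    (hμ : 0 < μv) (hβ : 0 < βv) (hK : 0 < K) (hv : 0 < vc) (hα : 0 < α) (hδ : 0 < δ)
    (Sstar Pstar : ℝ)
    (hSstar : Sstar = δ / (α * βv * vc))
    (hPstar : Pstar = (μv / βv) * (1 - δ / (α * βv * vc ^ 2 * K))) :
    (0 < (jacI μv βv K vc α δ Sstar Pstar).det ↔ vc ^ 2 > δ / (α * K * βv)) ∧
    ((jacI μv βv K vc α δ Sstar Pstar).trace < 0 ∧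
        0 < (jacI μv βv K vc α δ Sstar Pstar).det ↔
      vc ^ 2 > δ / (α * K * βv)) := by
  subst hSstar hPstar
  have h0 : (0:ℝ) < α * βv * vc * K := by positivity
  have hdet : (jacI μv βv K vc α δ (δ / (α * βv * vc))
      ((μv / βv) * (1 - δ / (α * βv * vc ^ 2 * K)))).det =
      δ * μv / (α * βv * vc * K) * (α * βv * vc ^ 2 * K - δ) := by
    simp only [jacI, deriv11', deriv12', deriv21', deriv22', Matrix.det_fin_two_of]
    field_simp
    ring
  have htr : (jacI μv βv K vc α δ (δ / (α * βv * vc))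
      ((μv / βv) * (1 - δ / (α * βv * vc ^ 2 * K)))).trace =
      -(δ * μv / (α * βv * vc * K)) := by
    simp only [jacI, deriv11', deriv12', deriv21', deriv22', Matrix.trace_fin_two_of]
    field_simp
    ring
  have hiff : 0 < (jacI μv βv K vc α δ (δ / (α * βv * vc))
      ((μv / βv) * (1 - δ / (α * βv * vc ^ 2 * K)))).det ↔ vc ^ 2 > δ / (α * K * βv) := by
    rw [hdet]
    rw [mul_pos_iff_of_pos_left (by positivity : (0:ℝ) < δ * μv / (α * βv * vc * K)), sub_pos, gt_iff_lt, div_lt_iff₀ (by positivity : (0:ℝ) < α * K * βv)]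
    constructor <;> intro h <;> nlinarith
  refine ⟨hiff, ?_⟩
  rw [htr]
  constructor
  · rintro ⟨-, h⟩; exact hiff.mp h
  · intro h; exact ⟨neg_neg_of_pos (by positivity), hiff.mpr h⟩
end

section
/- Let S, P : ℝ → ℝ be a solution of the Type II model for t ≥ 0 with S(0) > 0 and P(0) > 0, and suppose β_v·K·v_c²·(α − δ·E_p) < δ (equivalently v_c² < δ/(β_v·K·(α − δ·E_p)) when α > δ·E_p). Then S(t) → v_c·K and P(t) → 0 as t → ∞. That is, the disease-free equilibrium (v_c·K, 0) attracts every solution with positive initial conditions (global stability of the disease-free equilibrium). -/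
/-!
Positivity of `S` and `P` persists: along a solution `x' ≥ -C x` on each compact time interval,
which keeps `x` above a decaying exponential. Dropping the infection term, `S` is a
subsolution of the logistic equation, so eventually `S ≤ c` for every `c > vc K`. The
per-capita growth rate of the pathogen, `α βv vc S / (1 + βv vc Ep S)`, is increasing in `S`
and is below `δ` exactly when `βv vc (α - δ Ep) S < δ`; by the hypothesis this holds at
`S = vc K`, hence up to some `c > vc K`, so `P` eventually decays exponentially. Once `P` is
small, `S` grows at a positive rate while it is below any level `c < vc K`.
-/

open Filter Set Topology

theorem image_le_of_deriv_lt_deriv_boundary {f B B' : ℝ → ℝ} {a b : ℝ}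
    (hf : Differentiable ℝ f) (hB : ∀ t, HasDerivAt B (B' t) t) (ha : f a ≤ B a)
    (bound : ∀ t ∈ Ico a b, f t = B t → deriv f t < B' t) : ∀ t ∈ Icc a b, f t ≤ B t :=
  image_le_of_deriv_right_lt_deriv_boundary hf.continuous.continuousOn
    (fun t _ => (hf t).hasDerivAt.hasDerivWithinAt) ha hB bound

theorem image_ge_of_deriv_gt_deriv_boundary {f B B' : ℝ → ℝ} {a b : ℝ}
    (hf : Differentiable ℝ f) (hB : ∀ t, HasDerivAt B (B' t) t) (ha : B a ≤ f a)
    (bound : ∀ t ∈ Ico a b, f t = B t → B' t < deriv f t) : ∀ t ∈ Icc a b, B t ≤ f t := by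
  have := image_le_of_deriv_lt_deriv_boundary (f := fun t => -f t) (b := b) hf.fun_neg
    (fun t => (hB t).fun_neg) (neg_le_neg ha) fun t ht hft => by
      rw [deriv.fun_neg, neg_lt_neg_iff]
      exact bound t ht (neg_inj.1 hft)
  exact fun t ht => neg_le_neg_iff.1 (this t ht)

theorem hasDerivAt_const_mul_exp_mul_sub (c k a t : ℝ) :
    HasDerivAt (fun s => c * Real.exp (k * (s - a))) (k * (c * Real.exp (k * (t - a)))) t :=
  (HasDerivAt.const_mul c
    (HasDerivAt.exp (((hasDerivAt_id' t).sub_const a).const_mul k))).congr_deriv (by ring)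

theorem pos_of_neg_mul_le_deriv {x : ℝ → ℝ} (hx : Differentiable ℝ x) {a b C : ℝ}
    (ha : 0 < x a) (hd : ∀ t ∈ Icc a b, 0 < x t → -C * x t ≤ deriv x t) :
    ∀ t ∈ Icc a b, 0 < x t := by
  have hB_pos : ∀ t, 0 < x a * Real.exp (-(C + 1) * (t - a)) :=
    fun t => mul_pos ha (Real.exp_pos _)
  have hxB := image_ge_of_deriv_gt_deriv_boundary (a := a) (b := b) hx
    (hasDerivAt_const_mul_exp_mul_sub (x a) (-(C + 1)) a) (by simp) fun t ht hxt => by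
      have := hd t (Ico_subset_Icc_self ht) (hxt ▸ hB_pos t)
      rw [hxt] at this
      linarith [hB_pos t]
  exact fun t ht => (hB_pos t).trans_le (hxB t ht)

theorem tendsto_zero_of_deriv_le_neg_mul {x : ℝ → ℝ} (hx : Differentiable ℝ x) {ε : ℝ}
    (hε : 0 < ε) (hpos : ∀ᶠ t in atTop, 0 < x t) (hd : ∀ᶠ t in atTop, deriv x t ≤ -ε * x t) :
    Tendsto x atTop (𝓝 0) := by
  obtain ⟨a, ha⟩ := (hpos.and hd).exists_forall_of_atTop
  have hB_pos : ∀ t, 0 < x a * Real.exp (-(ε / 2) * (t - a)) :=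
    fun t => mul_pos (ha a le_rfl).1 (Real.exp_pos _)
  have hxB : ∀ t ≥ a, x t ≤ x a * Real.exp (-(ε / 2) * (t - a)) := fun t ht =>
    image_le_of_deriv_lt_deriv_boundary hx (hasDerivAt_const_mul_exp_mul_sub _ _ a) (by simp)
      (fun s hs hxs => by
        have := (ha s hs.1).2
        rw [hxs] at this
        nlinarith [hB_pos s]) t ⟨ht, le_rfl⟩
  have hB : Tendsto (fun t => x a * Real.exp (-(ε / 2) * (t - a))) atTop (𝓝 0) := by
    have := (tendsto_atTop_add_const_right _ (-a) tendsto_id).const_mul_atTop_of_neg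
      (by linarith : -(ε / 2) < 0)
    simpa [sub_eq_add_neg] using (Real.tendsto_exp_atBot.comp this).const_mul (x a)
  exact tendsto_of_tendsto_of_tendsto_of_le_of_le' tendsto_const_nhds hB
    (hpos.mono fun t ht => ht.le) ((eventually_ge_atTop a).mono hxB)

theorem eventually_le_of_deriv_le_neg {x : ℝ → ℝ} (hx : Differentiable ℝ x) {c m : ℝ}
    (hm : 0 < m) (hd : ∀ᶠ t in atTop, c ≤ x t → deriv x t ≤ -m) :
    ∀ᶠ t in atTop, x t ≤ c := by
  obtain ⟨a, ha⟩ := hd.exists_forall_of_atTop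
  obtain ⟨t₁, ht₁a, ht₁⟩ : ∃ t₁ ≥ a, x t₁ ≤ c := by
    by_contra! hgt
    set t := a + (x a - c) / m
    have hta : a ≤ t := le_add_of_nonneg_right (div_nonneg (sub_nonneg.2 (hgt a le_rfl).le) hm.le)
    have hdrop := (convex_Ici a).image_sub_le_mul_sub_of_deriv_le hx.continuous.continuousOn
      hx.differentiableOn (fun s hs => ha s (interior_subset hs) (hgt s (interior_subset hs)).le)
      a self_mem_Ici t hta hta
    have : -m * (t - a) = c - x a := by simp only [t]; field_simp; ring
    linarith [hgt t hta]
  filter_upwards [eventually_ge_atTop t₁] with t ht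
  exact image_le_of_deriv_lt_deriv_boundary hx (fun _ => hasDerivAt_const _ c) ht₁
    (fun s hs hxs => (ha s (ht₁a.trans hs.1) hxs.ge).trans_lt (neg_neg_of_pos hm)) t ⟨ht, le_rfl⟩

theorem eventually_ge_of_mul_le_deriv {x : ℝ → ℝ} (hx : Differentiable ℝ x) {c k : ℝ}
    (hk : 0 < k) (hpos : ∀ᶠ t in atTop, 0 < x t)
    (hd : ∀ᶠ t in atTop, x t ≤ c → k * x t ≤ deriv x t) : ∀ᶠ t in atTop, c ≤ x t := by
  rcases le_or_gt c 0 with hc | hc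
  · exact hpos.mono fun t ht => hc.trans ht.le
  obtain ⟨a, ha⟩ := (hpos.and hd).exists_forall_of_atTop
  set c₀ := min (x a) c
  have hc₀ : 0 < c₀ := lt_min (ha a le_rfl).1 hc
  have hx_ge : ∀ t ≥ a, c₀ ≤ x t := fun t ht =>
    image_ge_of_deriv_gt_deriv_boundary hx (fun _ => hasDerivAt_const _ c₀) (min_le_left _ _)
      (fun s hs hxs => by
        have := (ha s hs.1).2 (hxs.trans_le (min_le_right _ _))
        rw [hxs] at this
        nlinarith) t ⟨ht, le_rfl⟩
  have := eventually_le_of_deriv_le_neg hx.fun_neg (mul_pos hk hc₀) (c := -c) <| by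
    filter_upwards [eventually_ge_atTop a] with t ht hxt
    rw [deriv.fun_neg]
    have := (ha t ht).2 (neg_le_neg_iff.1 hxt)
    nlinarith [hx_ge t ht]
  exact this.mono fun t ht => neg_le_neg_iff.1 ht

theorem antitoneOn_mul_one_sub_div {L : ℝ} (hL : 0 < L) :
    AntitoneOn (fun s => s * (1 - s / L)) (Ici (L / 2)) := by
  intro s hs s' hs' hss'
  have hsum : 1 ≤ (s + s') / L := (one_le_div hL).2 (by linarith [mem_Ici.1 hs, mem_Ici.1 hs'])
  have : s * (1 - s / L) - s' * (1 - s' / L) = (s' - s) * ((s + s') / L - 1) := by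
    field_simp; ring
  nlinarith [mul_nonneg (sub_nonneg.2 hss') (sub_nonneg.2 hsum)]

theorem monotoneOn_mul_div_one_add_mul {a b : ℝ} (ha : 0 ≤ a) (hb : 0 ≤ b) :
    MonotoneOn (fun s => a * s / (1 + b * s)) (Ici 0) := by
  intro s hs s' hs' hss'
  have hs : 0 ≤ s := hs
  have hs' : 0 ≤ s' := hs'
  dsimp only
  rw [div_le_div_iff₀ (by positivity) (by positivity)]
  nlinarith [mul_le_mul_of_nonneg_left hss' ha]

structure IsTypeIISolution (μv βv Ep K vc α δ : ℝ) (S P : ℝ → ℝ) : Prop where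
  differentiable_S : Differentiable ℝ S
  differentiable_P : Differentiable ℝ P
  deriv_S : ∀ t ≥ (0:ℝ), deriv S t = vc * μv * S t * (1 - S t / (vc * K)) -
    βv * vc * S t * P t / (1 + βv * vc * Ep * S t)
  deriv_P : ∀ t ≥ (0:ℝ), deriv P t =
    α * βv * vc * S t * P t / (1 + βv * vc * Ep * S t) - δ * P t

namespace IsTypeIISolution

variable {μv βv Ep K vc α δ : ℝ} {S P : ℝ → ℝ}

theorem S_pos (h : IsTypeIISolution μv βv Ep K vc α δ S P) (hβ : 0 < βv) (hv : 0 < vc)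
    (hE : 0 < Ep) (hS0 : 0 < S 0) : ∀ t ≥ (0:ℝ), 0 < S t := by
  intro b hb
  have hSc := h.differentiable_S.continuous
  have hPc := h.differentiable_P.continuous
  set g := fun t => vc * μv * (1 - S t / (vc * K)) - βv * vc * P t / (1 + βv * vc * Ep * S t)
  have hg : ContinuousOn g (Icc 0 b ∩ {t | 0 ≤ S t}) := by
    refine (Continuous.continuousOn (by fun_prop)).sub
      (ContinuousOn.div (by fun_prop) (by fun_prop) fun t ht => ?_)
    have : 0 ≤ S t := ht.2
    positivity
  obtain ⟨C, hC⟩ :=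
    (isCompact_Icc.inter_right (isClosed_le continuous_const hSc)).exists_bound_of_continuousOn hg
  refine pos_of_neg_mul_le_deriv h.differentiable_S hS0 (C := C) (fun t ht hSt => ?_) b ⟨hb, le_rfl⟩
  have hgt : -C ≤ g t := neg_le_of_abs_le (hC t ⟨ht, hSt.le⟩)
  calc -C * S t ≤ g t * S t := mul_le_mul_of_nonneg_right hgt hSt.le
    _ = deriv S t := by rw [h.deriv_S t ht.1]; ring

theorem P_pos (h : IsTypeIISolution μv βv Ep K vc α δ S P) (hα : 0 < α) (hβ : 0 < βv)
    (hv : 0 < vc) (hE : 0 < Ep) (hS_pos : ∀ t ≥ (0:ℝ), 0 < S t) (hP0 : 0 < P 0) :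
    ∀ t ≥ (0:ℝ), 0 < P t := by
  intro b hb
  refine pos_of_neg_mul_le_deriv h.differentiable_P hP0 (C := δ) (fun t ht hPt => ?_) b
    ⟨hb, le_rfl⟩
  have := hS_pos t ht.1
  have : 0 ≤ α * βv * vc * S t * P t / (1 + βv * vc * Ep * S t) := by positivity
  rw [h.deriv_P t ht.1]
  linarith

theorem eventually_S_le (h : IsTypeIISolution μv βv Ep K vc α δ S P) (hμ : 0 < μv)
    (hβ : 0 < βv) (hv : 0 < vc) (hE : 0 < Ep) (hK : 0 < K) (hS_pos : ∀ t ≥ (0:ℝ), 0 < S t)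
    (hP_pos : ∀ t ≥ (0:ℝ), 0 < P t) {c : ℝ} (hc : vc * K < c) : ∀ᶠ t in atTop, S t ≤ c := by
  have hL : 0 < vc * K := mul_pos hv hK
  have hc_mem : c ∈ Ici (vc * K / 2) := by rw [mem_Ici]; linarith
  have hm : 0 < -(vc * μv * (c * (1 - c / (vc * K)))) :=
    neg_pos.2 (mul_neg_of_pos_of_neg (by positivity)
      (mul_neg_of_pos_of_neg (hL.trans hc) (sub_neg.2 ((one_lt_div hL).2 hc))))
  refine eventually_le_of_deriv_le_neg h.differentiable_S hm ?_
  filter_upwards [eventually_ge_atTop 0] with t ht hcS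
  have := hS_pos t ht
  have := hP_pos t ht
  have hinf : 0 ≤ βv * vc * S t * P t / (1 + βv * vc * Ep * S t) := by positivity
  have hlog : S t * (1 - S t / (vc * K)) ≤ c * (1 - c / (vc * K)) :=
    antitoneOn_mul_one_sub_div hL hc_mem (mem_Ici.2 (hc_mem.trans hcS)) hcS
  rw [h.deriv_S t ht]
  nlinarith [mul_le_mul_of_nonneg_left hlog (mul_pos hv hμ).le]

theorem tendsto_P_zero (h : IsTypeIISolution μv βv Ep K vc α δ S P) (hμ : 0 < μv)
    (hα : 0 < α) (hβ : 0 < βv) (hv : 0 < vc) (hE : 0 < Ep) (hK : 0 < K)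
    (hS_pos : ∀ t ≥ (0:ℝ), 0 < S t) (hP_pos : ∀ t ≥ (0:ℝ), 0 < P t)
    (hcond : βv * K * vc ^ 2 * (α - δ * Ep) < δ) : Tendsto P atTop (𝓝 0) := by
  obtain ⟨c, hc, hqc⟩ : ∃ c > vc * K, βv * vc * (α - δ * Ep) * c < δ :=
    (((continuous_const_mul _).tendsto (vc * K)).eventually_lt_const
      (show βv * vc * (α - δ * Ep) * (vc * K) < δ by linarith)).exists_gt
  have hc_pos : 0 < c := (mul_pos hv hK).trans hc
  have hε : 0 < δ - α * βv * vc * c / (1 + βv * vc * Ep * c) :=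
    sub_pos.2 ((div_lt_iff₀ (by positivity)).2 (by linarith))
  refine tendsto_zero_of_deriv_le_neg_mul h.differentiable_P hε
    ((eventually_ge_atTop 0).mono hP_pos) ?_
  filter_upwards [eventually_ge_atTop 0,
    h.eventually_S_le hμ hβ hv hE hK hS_pos hP_pos hc] with t ht hSc
  have hS := hS_pos t ht
  have hP := hP_pos t ht
  have hg : α * βv * vc * S t / (1 + βv * vc * Ep * S t) ≤
      α * βv * vc * c / (1 + βv * vc * Ep * c) :=
    monotoneOn_mul_div_one_add_mul (by positivity) (by positivity) (mem_Ici.2 hS.le)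
      (mem_Ici.2 hc_pos.le) hSc
  rw [h.deriv_P t ht, mul_div_right_comm]
  nlinarith [mul_le_mul_of_nonneg_right hg hP.le]

theorem eventually_S_ge (h : IsTypeIISolution μv βv Ep K vc α δ S P) (hμ : 0 < μv)
    (hβ : 0 < βv) (hv : 0 < vc) (hE : 0 < Ep) (hK : 0 < K) (hS_pos : ∀ t ≥ (0:ℝ), 0 < S t)
    (hP_pos : ∀ t ≥ (0:ℝ), 0 < P t) (hP : Tendsto P atTop (𝓝 0)) {c : ℝ} (hc : c < vc * K) :
    ∀ᶠ t in atTop, c ≤ S t := by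
  have hL : 0 < vc * K := mul_pos hv hK
  have hgap : 0 < 1 - c / (vc * K) := sub_pos.2 ((div_lt_one hL).2 hc)
  have hk : 0 < vc * μv * (1 - c / (vc * K)) / 2 := by positivity
  have hβP : Tendsto (fun t => βv * vc * P t) atTop (𝓝 0) := by
    simpa using hP.const_mul (βv * vc)
  refine eventually_ge_of_mul_le_deriv h.differentiable_S hk
    ((eventually_ge_atTop 0).mono hS_pos) ?_
  filter_upwards [eventually_ge_atTop 0, hβP.eventually_lt_const hk] with t ht hPt hSc
  have hS := hS_pos t ht
  have hP := hP_pos t ht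
  have hinf : βv * vc * S t * P t / (1 + βv * vc * Ep * S t) ≤ βv * vc * P t * S t := by
    rw [mul_right_comm]
    exact div_le_self (by positivity) (le_add_of_nonneg_right (by positivity))
  have hlog : 1 - c / (vc * K) ≤ 1 - S t / (vc * K) := by gcongr
  rw [h.deriv_S t ht]
  nlinarith [mul_le_mul_of_nonneg_left hlog (by positivity : 0 ≤ vc * μv * S t),
    mul_le_mul_of_nonneg_right hPt.le hS.le]

end IsTypeIISolution

theorem typeII_disease_free_global_stability_general (μv βv Ep K vc α δ : ℝ)
    (hμ : 0 < μv) (hβ : 0 < βv) (hE : 0 < Ep) (hK : 0 < K) (hv : 0 < vc)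
    (hα : 0 < α)
    (S P : ℝ → ℝ) (hS : Differentiable ℝ S) (hP : Differentiable ℝ P)
    (hS' : ∀ t ≥ (0:ℝ),
      deriv S t = vc * μv * S t * (1 - S t / (vc * K)) -
        βv * vc * S t * P t / (1 + βv * vc * Ep * S t))
    (hP' : ∀ t ≥ (0:ℝ),
      deriv P t = α * βv * vc * S t * P t / (1 + βv * vc * Ep * S t) - δ * P t)
    (hS0 : 0 < S 0) (hP0 : 0 < P 0)
    (hcond : βv * K * vc ^ 2 * (α - δ * Ep) < δ) :
    Tendsto S atTop (nhds (vc * K)) ∧ Tendsto P atTop (nhds 0) := by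
  have h : IsTypeIISolution μv βv Ep K vc α δ S P := ⟨hS, hP, hS', hP'⟩
  have hS_pos := h.S_pos hβ hv hE hS0
  have hP_pos := h.P_pos hα hβ hv hE hS_pos hP0
  have hP_lim := h.tendsto_P_zero hμ hα hβ hv hE hK hS_pos hP_pos hcond
  refine ⟨tendsto_order.2 ⟨fun c hc => ?_, fun c hc => ?_⟩, hP_lim⟩
  · obtain ⟨c', hcc', hc'⟩ := exists_between hc
    exact (h.eventually_S_ge hμ hβ hv hE hK hS_pos hP_pos hP_lim hc').mono
      fun t ht => hcc'.trans_le ht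
  · obtain ⟨c', hc', hc'c⟩ := exists_between hc
    exact (h.eventually_S_le hμ hβ hv hE hK hS_pos hP_pos hc').mono
      fun t ht => ht.trans_lt hc'c

/-- Global stability of the disease-free equilibrium of the Type II model:
if `βv·K·vc²·(α − δ·Ep) < δ`, every solution with positive initial conditions satisfies
`S(t) → vc·K` and `P(t) → 0` as `t → ∞`. -/
theorem typeII_disease_free_global_stability (μv βv Ep K vc α δ : ℝ)
    (hμ : 0 < μv) (hβ : 0 < βv) (hE : 0 < Ep) (hK : 0 < K) (hv : 0 < vc)
    (hα : 0 < α) (hδ : 0 < δ)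
    (S P : ℝ → ℝ) (hS : Differentiable ℝ S) (hP : Differentiable ℝ P)
    (hS' : ∀ t ≥ (0:ℝ),
      deriv S t = vc * μv * S t * (1 - S t / (vc * K)) -
        βv * vc * S t * P t / (1 + βv * vc * Ep * S t))
    (hP' : ∀ t ≥ (0:ℝ),
      deriv P t = α * βv * vc * S t * P t / (1 + βv * vc * Ep * S t) - δ * P t)
    (hS0 : 0 < S 0) (hP0 : 0 < P 0)
    (hcond : βv * K * vc ^ 2 * (α - δ * Ep) < δ) :
    Tendsto S atTop (nhds (vc * K)) ∧ Tendsto P atTop (nhds 0) :=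
  typeII_disease_free_global_stability_general μv βv Ep K vc α δ hμ hβ hE hK hv hα S P hS hP hS' hP'
    hS0 hP0 hcond
end

section
/- Let S, P : ℝ → ℝ be a solution of the Type II model and let t₀ ≥ 0. Suppose 0 < S(t) ≤ v_c·K and P(t) ≥ 0 for all t ≥ t₀. Then for all t ≥ t₀, 0 ≤ P(t) ≤ P(t₀)·exp(r·(t − t₀)), where r = δ·(α·β_v·v_c²·K/(δ·(1 + β_v·v_c²·E_p·K)) − 1). In particular, if β_v·K·v_c²·(α − δ·E_p) < δ then r < 0 and P(t) → 0 as t → ∞. -/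
/-!
On the invariant region the host density enters `dP/dt` only through the Holling type II
per-capita gain `α βv vc S / (1 + βv vc Ep S)`, which is increasing in `S`; bounding it by its value
at `S = vc K` gives the linear differential inequality `P' ≤ r P`, and Grönwall's inequality turns
this into the exponential bound. When `r < 0` the bound squeezes `P` to `0`.
-/

open Filter Set Real

theorem le_mul_exp_of_deriv_le_mul {f : ℝ → ℝ} {r t₀ : ℝ} (hf : Differentiable ℝ f)
    (hderiv : ∀ t ≥ t₀, deriv f t ≤ r * f t) :
    ∀ t ≥ t₀, f t ≤ f t₀ * exp (r * (t - t₀)) := by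
  intro t ht
  have := le_gronwallBound_of_liminf_deriv_right_le (f' := deriv f) (ε := 0) (b := t)
    hf.continuous.continuousOn
    (fun x _ _ hr => (hf x).hasDerivAt.hasDerivWithinAt.liminf_right_slope_le hr) le_rfl
    (fun x hx => by simpa using hderiv x hx.1) t ⟨ht, le_rfl⟩
  rwa [gronwallBound_ε0] at this

theorem div_one_add_mul_le_div_one_add_mul {a b x y : ℝ} (ha : 0 ≤ a) (hb : 0 ≤ b)
    (hx : 0 ≤ x) (hxy : x ≤ y) :
    a * x / (1 + b * x) ≤ a * y / (1 + b * y) := by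
  have hy : 0 ≤ y := hx.trans hxy
  rw [div_le_div_iff₀ (by positivity) (by positivity)]
  nlinarith [mul_le_mul_of_nonneg_left hxy ha]

theorem tendsto_zero_of_nonneg_of_le_mul_exp {f : ℝ → ℝ} {C r t₀ : ℝ} (hr : r < 0)
    (hf : ∀ t ≥ t₀, 0 ≤ f t ∧ f t ≤ C * exp (r * (t - t₀))) :
    Tendsto f atTop (nhds 0) := by
  have hexp : Tendsto (fun t => C * exp (r * (t - t₀))) atTop (nhds 0) := by
    simpa [sub_eq_add_neg] using (tendsto_exp_atBot.comp <|
      (tendsto_atTop_add_const_right _ (-t₀) tendsto_id).const_mul_atTop_of_neg hr).const_mul C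
  refine tendsto_of_tendsto_of_tendsto_of_le_of_le' tendsto_const_nhds hexp ?_ ?_
  · filter_upwards [eventually_ge_atTop t₀] with t ht using (hf t ht).1
  · filter_upwards [eventually_ge_atTop t₀] with t ht using (hf t ht).2

theorem typeII_pathogen_exponential_bound_general (βv Ep K vc α δ : ℝ)
    (hβ : 0 < βv) (hE : 0 < Ep) (hK : 0 < K) (hv : 0 < vc)
    (hα : 0 < α) (hδ : 0 < δ)
    (S P : ℝ → ℝ) (hP : Differentiable ℝ P)
    (hP' : ∀ t : ℝ,
      deriv P t = α * βv * vc * S t * P t / (1 + βv * vc * Ep * S t) - δ * P t)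
    (t₀ : ℝ)
    (hbound : ∀ t ≥ t₀, 0 < S t ∧ S t ≤ vc * K ∧ 0 ≤ P t) :
    (∀ t ≥ t₀, 0 ≤ P t ∧
      P t ≤ P t₀ *
        Real.exp (δ * (α * βv * vc ^ 2 * K / (δ * (1 + βv * vc ^ 2 * Ep * K)) - 1) *
          (t - t₀))) ∧
    (βv * K * vc ^ 2 * (α - δ * Ep) < δ →
      δ * (α * βv * vc ^ 2 * K / (δ * (1 + βv * vc ^ 2 * Ep * K)) - 1) < 0 ∧
      Tendsto P atTop (nhds 0)) := by
  set r := δ * (α * βv * vc ^ 2 * K / (δ * (1 + βv * vc ^ 2 * Ep * K)) - 1)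
  have hr : r = α * βv * vc * (vc * K) / (1 + βv * vc * Ep * (vc * K)) - δ := by
    simp only [r]; field_simp
  have hderiv : ∀ t ≥ t₀, deriv P t ≤ r * P t := by
    intro t ht
    obtain ⟨hS, hSK, hPt⟩ := hbound t ht
    have hgain := div_one_add_mul_le_div_one_add_mul (a := α * βv * vc) (b := βv * vc * Ep)
      (by positivity) (by positivity) hS.le hSK
    rw [hP' t, hr, sub_mul, mul_div_right_comm]
    gcongr
  have hexp : ∀ t ≥ t₀, 0 ≤ P t ∧ P t ≤ P t₀ * exp (r * (t - t₀)) := fun t ht =>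
    ⟨(hbound t ht).2.2, le_mul_exp_of_deriv_le_mul hP hderiv t ht⟩
  refine ⟨hexp, fun hsmall => ?_⟩
  have hr_neg : r < 0 := by
    rw [hr, sub_neg, div_lt_iff₀ (by positivity)]
    linarith
  exact ⟨hr_neg, tendsto_zero_of_nonneg_of_le_mul_exp hr_neg hexp⟩

/-- Exponential bound on the pathogen density of the Type II model:
if `0 < S(t) ≤ vc·K` and `P(t) ≥ 0` for all `t ≥ t₀`, then
`0 ≤ P(t) ≤ P(t₀)·exp(r·(t − t₀))` with
`r = δ·(α·βv·vc²·K/(δ·(1 + βv·vc²·Ep·K)) − 1)`; in particular, if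
`βv·K·vc²·(α − δ·Ep) < δ` then `r < 0` and `P(t) → 0` as `t → ∞`. -/
theorem typeII_pathogen_exponential_bound (μv βv Ep K vc α δ : ℝ)
    (hμ : 0 < μv) (hβ : 0 < βv) (hE : 0 < Ep) (hK : 0 < K) (hv : 0 < vc)
    (hα : 0 < α) (hδ : 0 < δ)
    (S P : ℝ → ℝ) (hS : Differentiable ℝ S) (hP : Differentiable ℝ P)
    (hS' : ∀ t : ℝ,
      deriv S t = vc * μv * S t * (1 - S t / (vc * K)) -
        βv * vc * S t * P t / (1 + βv * vc * Ep * S t))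
    (hP' : ∀ t : ℝ,
      deriv P t = α * βv * vc * S t * P t / (1 + βv * vc * Ep * S t) - δ * P t)
    (t₀ : ℝ) (ht₀ : 0 ≤ t₀)
    (hbound : ∀ t ≥ t₀, 0 < S t ∧ S t ≤ vc * K ∧ 0 ≤ P t) :
    (∀ t ≥ t₀, 0 ≤ P t ∧
      P t ≤ P t₀ *
        Real.exp (δ * (α * βv * vc ^ 2 * K / (δ * (1 + βv * vc ^ 2 * Ep * K)) - 1) *
          (t - t₀))) ∧
    (βv * K * vc ^ 2 * (α - δ * Ep) < δ →
      δ * (α * βv * vc ^ 2 * K / (δ * (1 + βv * vc ^ 2 * Ep * K)) - 1) < 0 ∧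
      Tendsto P atTop (nhds 0)) :=
  typeII_pathogen_exponential_bound_general βv Ep K vc α δ hβ hE hK hv hα hδ S P hP hP' t₀ hbound
end

section
/- Let S, P : ℝ → ℝ be a solution of the Type II model for t ≥ 0 with S(0) > 0 and P(0) > 0 (so that S(t) > 0 and P(t) > 0 for all t ≥ 0). Then limsup_{t → ∞} S(t) ≤ v_c·K. More precisely, for any t₀ ≥ 0 with S(t₀) < v_c·K one has S(t) ≤ v_c·K + c·exp(−v_c·μ_v·(t − t₀)) for all t ≥ t₀ and some real constant c. -/
/-!
Each of `S`, `P` satisfies `f' = g * f` with `g` continuous on every interval `[0, b]` on which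
`S ≥ 0`; at a first zero of `f`, Grönwall's inequality `f ≥ f 0 * exp (-C t)` would give a
contradiction, so both stay positive. The predation term is then nonnegative, and the logistic
term lies below its tangent at `S = vc * K`, so `(S - vc * K)' ≤ -(vc * μv) * (S - vc * K)`.
Grönwall's inequality once more gives the exponential bound, hence the `limsup`.
-/

open Set Real Filter Topology

theorem le_mul_exp_of_deriv_le {f : ℝ → ℝ} (hf : Differentiable ℝ f) {a b k : ℝ}
    (bound : ∀ x ∈ Ico a b, deriv f x ≤ k * f x) :
    ∀ x ∈ Icc a b, f x ≤ f a * exp (k * (x - a)) := by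
  intro x hx
  have := le_gronwallBound_of_liminf_deriv_right_le hf.continuous.continuousOn
    (fun x _ _ hr => (hf x).hasDerivAt.hasDerivWithinAt.liminf_right_slope_le hr) le_rfl
    (ε := 0) (by simpa using bound) x hx
  rwa [gronwallBound_ε0] at this

theorem mul_exp_le_of_le_deriv {f : ℝ → ℝ} (hf : Differentiable ℝ f) {a b k : ℝ}
    (bound : ∀ x ∈ Ico a b, k * f x ≤ deriv f x) :
    ∀ x ∈ Icc a b, f a * exp (k * (x - a)) ≤ f x := by
  intro x hx
  have := le_mul_exp_of_deriv_le hf.neg (b := b) (k := k)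
    (fun x hx => by simp only [deriv.neg', Pi.neg_apply]; linarith [bound x hx]) x hx
  simp only [Pi.neg_apply] at this
  linarith

theorem exists_zero_nonneg_on_Icc {f : ℝ → ℝ} {a b : ℝ} (hab : a ≤ b)
    (hf : ContinuousOn f (Icc a b)) (ha : 0 ≤ f a) (hb : f b ≤ 0) :
    ∃ c ∈ Icc a b, f c = 0 ∧ ∀ x ∈ Icc a c, 0 ≤ f x := by
  set Z := Icc a b ∩ f ⁻¹' {0}
  have hZ : IsCompact Z :=
    isCompact_Icc.of_isClosed_subset (hf.preimage_isClosed_of_isClosed isClosed_Icc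
      isClosed_singleton) inter_subset_left
  obtain ⟨c, ⟨hc, hfc⟩, hleast⟩ :=
    hZ.exists_isLeast (intermediate_value_Icc' hab hf ⟨hb, ha⟩)
  refine ⟨c, hc, hfc, fun x hx => le_of_not_gt fun hfx => ?_⟩
  obtain ⟨y, hy, hfy⟩ := intermediate_value_Icc' hx.1 (hf.mono (Icc_subset_Icc_right
    (hx.2.trans hc.2))) ⟨hfx.le, ha⟩
  have hcy : c ≤ y := hleast ⟨⟨hy.1, hy.2.trans (hx.2.trans hc.2)⟩, hfy⟩
  have : y = x := le_antisymm hy.2 (hx.2.trans hcy)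
  exact hfx.ne (this ▸ hfy)

theorem pos_of_deriv_eq_mul {f g : ℝ → ℝ} (hf : Differentiable ℝ f) {a : ℝ} (ha : 0 < f a)
    (hg : ∀ b, (∀ x ∈ Icc a b, 0 ≤ f x) → ContinuousOn g (Icc a b))
    (hfg : ∀ x ≥ a, deriv f x = g x * f x) :
    ∀ x ≥ a, 0 < f x := by
  intro b hab
  by_contra! hb
  obtain ⟨c, hc, hfc, hnonneg⟩ :=
    exists_zero_nonneg_on_Icc hab hf.continuous.continuousOn ha.le hb
  obtain ⟨C, hC⟩ := isCompact_Icc.exists_bound_of_continuousOn (hg c hnonneg)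
  have hgrowth : ∀ x ∈ Ico a c, -C * f x ≤ deriv f x := fun x hx => by
    rw [hfg x hx.1]
    exact mul_le_mul_of_nonneg_right (neg_le_of_abs_le (hC x (Ico_subset_Icc_self hx)))
      (hnonneg x (Ico_subset_Icc_self hx))
  have := mul_exp_le_of_le_deriv hf hgrowth c (right_mem_Icc.2 hc.1)
  rw [hfc] at this
  exact (mul_pos ha (exp_pos _)).not_ge this

theorem limsup_le_of_le_add_mul_exp {f : ℝ → ℝ} {L c r t₀ : ℝ} (hr : 0 < r)
    (hf : IsBoundedUnder (· ≥ ·) atTop f)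
    (h : ∀ t ≥ t₀, f t ≤ L + c * exp (-r * (t - t₀))) :
    limsup f atTop ≤ L := by
  have hdecay : Tendsto (fun t => L + c * exp (-r * (t - t₀))) atTop (𝓝 L) := by
    have : Tendsto (fun t => r * (t - t₀)) atTop atTop :=
      (tendsto_atTop_add_const_right _ _ tendsto_id).const_mul_atTop hr
    simpa [neg_mul] using
      (tendsto_exp_neg_atTop_nhds_zero.comp this).const_mul c |>.const_add L
  calc limsup f atTop ≤ limsup (fun t => L + c * exp (-r * (t - t₀))) atTop :=
        limsup_le_limsup (eventually_ge_atTop t₀ |>.mono h) hf.isCoboundedUnder_le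
          hdecay.isBoundedUnder_le
    _ = L := hdecay.limsup_eq

theorem logistic_le_linear {r A : ℝ} (hr : 0 ≤ r) (hA : 0 < A) (s : ℝ) :
    r * s * (1 - s / A) ≤ -r * (s - A) := by
  have hgap : r * s * (1 - s / A) + r * (s - A) = -(r / A * (s - A) ^ 2) := by
    field_simp
    ring
  have : 0 ≤ r / A * (s - A) ^ 2 := by positivity
  linarith

section TypeII

variable {μv βv Ep K vc α δ : ℝ} {S P : ℝ → ℝ}

theorem typeII_S_pos (hβ : 0 < βv) (hE : 0 < Ep) (hv : 0 < vc)
    (hS : Differentiable ℝ S) (hP : Differentiable ℝ P)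
    (hS' : ∀ t ≥ (0:ℝ), deriv S t = vc * μv * S t * (1 - S t / (vc * K)) -
        βv * vc * S t * P t / (1 + βv * vc * Ep * S t))
    (hS0 : 0 < S 0) :
    ∀ t ≥ (0:ℝ), 0 < S t := by
  refine pos_of_deriv_eq_mul hS hS0
    (g := fun t => vc * μv * (1 - S t / (vc * K)) - βv * vc * P t / (1 + βv * vc * Ep * S t))
    (fun b hnonneg => ?_) (fun t ht => by rw [hS' t ht]; ring)
  have hdenom : ∀ t ∈ Icc 0 b, 1 + βv * vc * Ep * S t ≠ 0 := fun t ht => by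
    have := hnonneg t ht
    positivity
  have := hS.continuous
  have := hP.continuous
  fun_prop (disch := exact hdenom)

theorem typeII_P_pos (hβ : 0 < βv) (hE : 0 < Ep) (hv : 0 < vc)
    (hS : Differentiable ℝ S) (hP : Differentiable ℝ P) (hSpos : ∀ t ≥ (0:ℝ), 0 < S t)
    (hP' : ∀ t ≥ (0:ℝ),
      deriv P t = α * βv * vc * S t * P t / (1 + βv * vc * Ep * S t) - δ * P t)
    (hP0 : 0 < P 0) :
    ∀ t ≥ (0:ℝ), 0 < P t := by
  refine pos_of_deriv_eq_mul hP hP0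
    (g := fun t => α * βv * vc * S t / (1 + βv * vc * Ep * S t) - δ)
    (fun b _ => ?_) (fun t ht => by rw [hP' t ht]; ring)
  have hdenom : ∀ t ∈ Icc 0 b, 1 + βv * vc * Ep * S t ≠ 0 := fun t ht => by
    have := hSpos t ht.1
    positivity
  have := hS.continuous
  fun_prop (disch := exact hdenom)

theorem typeII_S_le (hμ : 0 < μv) (hβ : 0 < βv) (hE : 0 < Ep) (hK : 0 < K) (hv : 0 < vc)
    (hS : Differentiable ℝ S)
    (hS' : ∀ t ≥ (0:ℝ), deriv S t = vc * μv * S t * (1 - S t / (vc * K)) -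
        βv * vc * S t * P t / (1 + βv * vc * Ep * S t))
    (hSpos : ∀ t ≥ (0:ℝ), 0 < S t) (hPpos : ∀ t ≥ (0:ℝ), 0 < P t)
    {t₀ : ℝ} (ht₀ : 0 ≤ t₀) :
    ∀ t ≥ t₀, S t ≤ vc * K + (S t₀ - vc * K) * exp (-(vc * μv) * (t - t₀)) := by
  intro t ht
  have hbound : ∀ x ∈ Ico t₀ t, deriv (fun s => S s - vc * K) x
      ≤ -(vc * μv) * (S x - vc * K) := fun x hx => by
    have hx0 : 0 ≤ x := ht₀.trans hx.1
    have := hSpos x hx0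
    have := hPpos x hx0
    have hpredation : 0 ≤ βv * vc * S x * P x / (1 + βv * vc * Ep * S x) := by positivity
    rw [deriv_sub_const, hS' x hx0]
    linarith [logistic_le_linear (by positivity : 0 ≤ vc * μv) (mul_pos hv hK) (S x)]
  have := le_mul_exp_of_deriv_le (hS.sub_const _) hbound t (right_mem_Icc.2 ht)
  linarith

end TypeII

theorem typeII_S_limsup_general (μv βv Ep K vc α δ : ℝ)
    (hμ : 0 < μv) (hβ : 0 < βv) (hE : 0 < Ep) (hK : 0 < K) (hv : 0 < vc)
    (S P : ℝ → ℝ) (hS : Differentiable ℝ S) (hP : Differentiable ℝ P)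
    (hS' : ∀ t ≥ (0:ℝ),
      deriv S t = vc * μv * S t * (1 - S t / (vc * K)) -
        βv * vc * S t * P t / (1 + βv * vc * Ep * S t))
    (hP' : ∀ t ≥ (0:ℝ),
      deriv P t = α * βv * vc * S t * P t / (1 + βv * vc * Ep * S t) - δ * P t)
    (hS0 : 0 < S 0) (hP0 : 0 < P 0) :
    limsup S atTop ≤ vc * K ∧
    ∀ t₀ ≥ (0:ℝ), S t₀ < vc * K → ∃ c : ℝ, ∀ t ≥ t₀,
      S t ≤ vc * K + c * Real.exp (-(vc * μv) * (t - t₀)) := by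
  have hSpos := typeII_S_pos hβ hE hv hS hP hS' hS0
  have hPpos := typeII_P_pos hβ hE hv hS hP hSpos hP' hP0
  have hdecay := fun t₀ (ht₀ : 0 ≤ t₀) => typeII_S_le hμ hβ hE hK hv hS hS' hSpos hPpos ht₀
  have hSbdd : IsBoundedUnder (· ≥ ·) atTop S :=
    isBoundedUnder_of_eventually_ge ((eventually_ge_atTop 0).mono fun t ht => (hSpos t ht).le)
  exact ⟨limsup_le_of_le_add_mul_exp (mul_pos hv hμ) hSbdd (hdecay 0 le_rfl),
    fun t₀ ht₀ _ => ⟨_, hdecay t₀ ht₀⟩⟩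

/-- For a solution of the Type II model with positive initial conditions,
`limsup_{t→∞} S(t) ≤ vc·K`; more precisely, for any `t₀ ≥ 0` with `S(t₀) < vc·K`,
`S(t) ≤ vc·K + c·exp(−vc·μv·(t − t₀))` for all `t ≥ t₀` and some real constant `c`. -/
theorem typeII_S_limsup (μv βv Ep K vc α δ : ℝ)
    (hμ : 0 < μv) (hβ : 0 < βv) (hE : 0 < Ep) (hK : 0 < K) (hv : 0 < vc)
    (hα : 0 < α) (hδ : 0 < δ)
    (S P : ℝ → ℝ) (hS : Differentiable ℝ S) (hP : Differentiable ℝ P)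
    (hS' : ∀ t ≥ (0:ℝ),
      deriv S t = vc * μv * S t * (1 - S t / (vc * K)) -
        βv * vc * S t * P t / (1 + βv * vc * Ep * S t))
    (hP' : ∀ t ≥ (0:ℝ),
      deriv P t = α * βv * vc * S t * P t / (1 + βv * vc * Ep * S t) - δ * P t)
    (hS0 : 0 < S 0) (hP0 : 0 < P 0) :
    limsup S atTop ≤ vc * K ∧
    ∀ t₀ ≥ (0:ℝ), S t₀ < vc * K → ∃ c : ℝ, ∀ t ≥ t₀,
      S t ≤ vc * K + c * Real.exp (-(vc * μv) * (t - t₀)) :=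
  typeII_S_limsup_general μv βv Ep K vc α δ hμ hβ hE hK hv S P hS hP hS' hP' hS0 hP0
end

section
/- Let S, P : ℝ → ℝ be a solution of the Type II model for t ≥ 0 with S(t) > 0 and P(t) > 0 for all t ≥ 0, and suppose P(t) → 0 as t → ∞. Then liminf_{t → ∞} S(t) ≥ v_c·K; combined with limsup_{t → ∞} S(t) ≤ v_c·K, this yields S(t) → v_c·K as t → ∞. -/
/-! The logistic term of `dS/dt` equals `μv / K * S * (vc * K - S)`, and the predation term lies
between `0` and `βv * vc * S * P`. Above any level `b > vc * K`, `S` therefore decreases at a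
uniform rate; below any level `a < vc * K` it increases at rate at least a constant times `S` once
`P` is small, and a positive lower bound on `S` makes this rate uniform too. A function whose
derivative is uniformly positive below a level reaches that level in finite time, and cannot
cross back down through it. -/

open Filter Set

section Comparison

variable {g : ℝ → ℝ}

theorem le_of_deriv_pos_of_eq (hg : Differentiable ℝ g) {a t₀ : ℝ} (h₀ : a ≤ g t₀)
    (hd : ∀ t ≥ t₀, g t = a → 0 < deriv g t) {t : ℝ} (ht : t₀ ≤ t) : a ≤ g t :=
  image_le_of_deriv_right_lt_deriv_boundary' (f := fun _ => a) (f' := 0) continuousOn_const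
    (fun _ _ => hasDerivWithinAt_const _ _ _) h₀ hg.continuous.continuousOn
    (fun x _ => (hg x).hasDerivAt.hasDerivWithinAt)
    (fun x hx hx_eq => hd x hx.1 hx_eq.symm) ⟨ht, le_rfl⟩

theorem eventually_ge_of_le_deriv (hg : Differentiable ℝ g) {T a c : ℝ} (hc : 0 < c)
    (hd : ∀ t ≥ T, g t ≤ a → c ≤ deriv g t) : ∀ᶠ t in atTop, a ≤ g t := by
  by_cases hreach : ∃ t₁ ≥ T, a ≤ g t₁
  · obtain ⟨t₁, hT₁, h₁⟩ := hreach
    filter_upwards [eventually_ge_atTop t₁] with t ht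
    exact le_of_deriv_pos_of_eq hg h₁
      (fun s hs hs_eq => hc.trans_le (hd s (hT₁.trans hs) hs_eq.le)) ht
  · push Not at hreach
    exfalso
    have hgrowth := (convex_Ici T).mul_sub_le_image_sub_of_le_deriv hg.continuous.continuousOn
      hg.differentiableOn
      (fun x hx => hd x (interior_subset hx) (hreach x (interior_subset hx)).le)
    set t := T + (a - g T) / c
    have hTt : T ≤ t :=
      le_add_of_nonneg_right (div_nonneg (sub_nonneg.2 (hreach T le_rfl).le) hc.le)
    have := hgrowth T self_mem_Ici t hTt hTt
    have hct : c * (t - T) = a - g T := by simp only [t]; field_simp; ring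
    linarith [hreach t hTt]

end Comparison

noncomputable def typeIIVectorRate (μv βv Ep K vc s p : ℝ) : ℝ :=
  vc * μv * s * (1 - s / (vc * K)) - βv * vc * s * p / (1 + βv * vc * Ep * s)

section TypeII

variable {μv βv Ep K vc s p : ℝ}

theorem typeIIVectorRate_le (hβ : 0 ≤ βv) (hE : 0 ≤ Ep) (hK : K ≠ 0) (hv : 0 < vc)
    (hs : 0 ≤ s) (hp : 0 ≤ p) :
    typeIIVectorRate μv βv Ep K vc s p ≤ μv / K * s * (vc * K - s) := by
  have hpred : 0 ≤ βv * vc * s * p / (1 + βv * vc * Ep * s) := by positivity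
  have hlogistic : vc * μv * s * (1 - s / (vc * K)) = μv / K * s * (vc * K - s) := by
    field_simp
  unfold typeIIVectorRate
  linarith

theorem le_typeIIVectorRate (hβ : 0 ≤ βv) (hE : 0 ≤ Ep) (hK : K ≠ 0) (hv : 0 < vc)
    (hs : 0 ≤ s) (hp : 0 ≤ p) :
    μv / K * s * (vc * K - s) - βv * vc * s * p ≤ typeIIVectorRate μv βv Ep K vc s p := by
  have hpred : βv * vc * s * p / (1 + βv * vc * Ep * s) ≤ βv * vc * s * p :=
    div_le_self (by positivity) (le_add_of_nonneg_right (by positivity))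
  have hlogistic : vc * μv * s * (1 - s / (vc * K)) = μv / K * s * (vc * K - s) := by
    field_simp
  unfold typeIIVectorRate
  linarith

variable {S P : ℝ → ℝ}

theorem eventually_le_of_typeIIVectorRate (hμ : 0 < μv) (hβ : 0 ≤ βv) (hE : 0 ≤ Ep)
    (hK : 0 < K) (hv : 0 < vc) (hS : Differentiable ℝ S)
    (hS' : ∀ t ≥ (0:ℝ), deriv S t = typeIIVectorRate μv βv Ep K vc (S t) (P t))
    (hP₀ : ∀ t ≥ (0:ℝ), 0 ≤ P t) {b : ℝ} (hb : vc * K < b) :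
    ∀ᶠ t in atTop, S t ≤ b := by
  have hb₀ : 0 < b := (by positivity : 0 < vc * K).trans hb
  have hdecay : ∀ t ≥ (0:ℝ), -S t ≤ -b →
      μv / K * b * (b - vc * K) ≤ deriv (fun t => -S t) t := by
    intro t ht hSb
    rw [neg_le_neg_iff] at hSb
    have hrate :=
      typeIIVectorRate_le (μv := μv) hβ hE hK.ne' hv (hb₀.le.trans hSb) (hP₀ t ht)
    have hmono : μv / K * b * (b - vc * K) ≤ μv / K * S t * (S t - vc * K) := by
      have := hb₀.trans_le hSb
      gcongr
    rw [deriv.fun_neg, hS' t ht]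
    linarith
  filter_upwards [eventually_ge_of_le_deriv hS.neg (by have := sub_pos.2 hb; positivity) hdecay]
    with t ht
  exact neg_le_neg_iff.1 ht

theorem eventually_ge_of_typeIIVectorRate (hμ : 0 < μv) (hβ : 0 < βv) (hE : 0 ≤ Ep)
    (hK : 0 < K) (hv : 0 < vc) (hS : Differentiable ℝ S)
    (hS' : ∀ t ≥ (0:ℝ), deriv S t = typeIIVectorRate μv βv Ep K vc (S t) (P t))
    (hS₀ : ∀ t ≥ (0:ℝ), 0 < S t) (hP₀ : ∀ t ≥ (0:ℝ), 0 ≤ P t)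
    (hPlim : Tendsto P atTop (nhds 0)) {a : ℝ} (ha : a < vc * K) :
    ∀ᶠ t in atTop, a ≤ S t := by
  rcases le_or_gt a 0 with ha₀ | ha₀
  · filter_upwards [eventually_ge_atTop 0] with t ht
    exact ha₀.trans (hS₀ t ht).le
  set c := μv * (vc * K - a) / (2 * K)
  have hc : 0 < c := by have := sub_pos.2 ha; positivity
  -- once `P ≤ c / (βv * vc)`, predation costs at most half of the logistic growth below `a`
  obtain ⟨T, hT⟩ := eventually_atTop.1 <|
    (hPlim.eventually (ge_mem_nhds (by positivity : 0 < c / (βv * vc)))).and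
      (eventually_ge_atTop 0)
  have hgrowth : ∀ t ≥ T, S t ≤ a → c * S t ≤ deriv S t := by
    intro t ht hSa
    obtain ⟨hPt, ht₀⟩ := hT t ht
    have hrate :=
      le_typeIIVectorRate (μv := μv) hβ.le hE hK.ne' hv (hS₀ t ht₀).le (hP₀ t ht₀)
    have hpred : βv * vc * S t * P t ≤ c * S t := by
      calc βv * vc * S t * P t ≤ βv * vc * S t * (c / (βv * vc)) := by
            have := hS₀ t ht₀; gcongr
        _ = c * S t := by field_simp
    have hlogistic : 2 * c * S t ≤ μv / K * S t * (vc * K - S t) := by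
      have : 2 * c * S t = μv / K * S t * (vc * K - a) := by simp only [c]; field_simp
      rw [this]
      have := hS₀ t ht₀
      gcongr
    rw [hS' t ht₀]
    linarith
  set m := min (S T) a
  have hm : 0 < m := lt_min (hS₀ T (hT T le_rfl).2) ha₀
  have hSm : ∀ t ≥ T, m ≤ S t := fun t ht =>
    le_of_deriv_pos_of_eq hS (min_le_left _ _)
      (fun s hs hs_eq => by
        have := hgrowth s hs (hs_eq.trans_le (min_le_right _ _))
        rw [hs_eq] at this
        exact (mul_pos hc hm).trans_le this) ht
  exact eventually_ge_of_le_deriv hS (mul_pos hc hm) fun t ht hSa =>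
    (mul_le_mul_of_nonneg_left (hSm t ht) hc.le).trans (hgrowth t ht hSa)

end TypeII

theorem typeII_S_liminf_and_limit_general (μv βv Ep K vc : ℝ)
    (hμ : 0 < μv) (hβ : 0 < βv) (hE : 0 < Ep) (hK : 0 < K) (hv : 0 < vc)
    (S P : ℝ → ℝ) (hS : Differentiable ℝ S)
    (hS' : ∀ t ≥ (0:ℝ),
      deriv S t = vc * μv * S t * (1 - S t / (vc * K)) -
        βv * vc * S t * P t / (1 + βv * vc * Ep * S t))
    (hpos : ∀ t ≥ (0:ℝ), 0 < S t ∧ 0 < P t)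
    (hPlim : Tendsto P atTop (nhds 0)) :
    vc * K ≤ liminf S atTop ∧ Tendsto S atTop (nhds (vc * K)) := by
  have hS₀ : ∀ t ≥ (0:ℝ), 0 < S t := fun t ht => (hpos t ht).1
  have hP₀ : ∀ t ≥ (0:ℝ), 0 ≤ P t := fun t ht => (hpos t ht).2.le
  have hlim : Tendsto S atTop (nhds (vc * K)) := by
    refine tendsto_order.2 ⟨fun a ha => ?_, fun b hb => ?_⟩
    · obtain ⟨a', haa', ha'⟩ := exists_between ha
      filter_upwards
        [eventually_ge_of_typeIIVectorRate hμ hβ hE.le hK hv hS hS' hS₀ hP₀ hPlim ha']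
        with t ht
      exact haa'.trans_le ht
    · obtain ⟨b', hb', hbb'⟩ := exists_between hb
      filter_upwards
        [eventually_le_of_typeIIVectorRate hμ hβ.le hE.le hK hv hS hS' hP₀ hb'] with t ht
      exact ht.trans_lt hbb'
  exact ⟨hlim.liminf_eq.ge, hlim⟩

/-- For a solution of the Type II model that stays positive for `t ≥ 0`
and whose pathogen density tends to `0`, one has `liminf_{t→∞} S(t) ≥ vc·K`, and
(combined with `limsup S ≤ vc·K`) `S(t) → vc·K` as `t → ∞`. -/
theorem typeII_S_liminf_and_limit (μv βv Ep K vc α δ : ℝ)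
    (hμ : 0 < μv) (hβ : 0 < βv) (hE : 0 < Ep) (hK : 0 < K) (hv : 0 < vc)
    (hα : 0 < α) (hδ : 0 < δ)
    (S P : ℝ → ℝ) (hS : Differentiable ℝ S) (hP : Differentiable ℝ P)
    (hS' : ∀ t ≥ (0:ℝ),
      deriv S t = vc * μv * S t * (1 - S t / (vc * K)) -
        βv * vc * S t * P t / (1 + βv * vc * Ep * S t))
    (hP' : ∀ t ≥ (0:ℝ),
      deriv P t = α * βv * vc * S t * P t / (1 + βv * vc * Ep * S t) - δ * P t)
    (hpos : ∀ t ≥ (0:ℝ), 0 < S t ∧ 0 < P t)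
    (hPlim : Tendsto P atTop (nhds 0)) :
    vc * K ≤ liminf S atTop ∧ Tendsto S atTop (nhds (vc * K)) :=
  typeII_S_liminf_and_limit_general μv βv Ep K vc hμ hβ hE hK hv S P hS hS' hpos hPlim
end

section
/- Assume α > δ·E_p and let (S*, P*) denote the Type II endemic equilibrium, S* = δ/(β_v·v_c·(α − δ·E_p)) and P* = α·μ_v·(K·β_v·v_c²·(α − δ·E_p) − δ)/(K·β_v²·v_c²·(α − δ·E_p)²). Then: (i) P* > 0 if and only if v_c² > δ/(K·β_v·(α − δ·E_p)); (ii) the endemic equilibrium coincides with the disease-free equilibrium (v_c·K, 0), i.e. S* = v_c·K and P* = 0, if and only if v_c² = δ/(K·β_v·(α − δ·E_p)) (the transcritical bifurcation point). -/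
/-- For the Type II endemic equilibrium `(S*, P*)` (assuming `α > δ·Ep`):
(i) `P* > 0` iff `vc² > δ/(K·βv·(α − δ·Ep))`; (ii) `(S*, P*) = (vc·K, 0)` iff
`vc² = δ/(K·βv·(α − δ·Ep))` (the transcritical bifurcation point). -/
theorem typeII_transcritical_bifurcation (μv βv Ep K vc α δ : ℝ)
    (hμ : 0 < μv) (hβ : 0 < βv) (hE : 0 < Ep) (hK : 0 < K) (hv : 0 < vc)
    (hα : 0 < α) (hδ : 0 < δ) (hαδ : δ * Ep < α)
    (Sstar Pstar : ℝ)
    (hSstar : Sstar = δ / (βv * vc * (α - δ * Ep)))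
    (hPstar : Pstar = α * μv * (K * βv * vc ^ 2 * (α - δ * Ep) - δ) /
      (K * βv ^ 2 * vc ^ 2 * (α - δ * Ep) ^ 2)) :
    (0 < Pstar ↔ vc ^ 2 > δ / (K * βv * (α - δ * Ep))) ∧
    (Sstar = vc * K ∧ Pstar = 0 ↔ vc ^ 2 = δ / (K * βv * (α - δ * Ep))) := by
  have hA : 0 < α - δ * Ep := by linarith
  have hD : 0 < K * βv ^ 2 * vc ^ 2 * (α - δ * Ep) ^ 2 := by positivity
  have hKβA : 0 < K * βv * (α - δ * Ep) := by positivity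
  constructor
  · rw [hPstar, gt_iff_lt, div_lt_iff₀ hKβA]
    constructor
    · intro h
      have hnum : 0 < α * μv * (K * βv * vc ^ 2 * (α - δ * Ep) - δ) := by
        by_contra hc
        push_neg at hc
        have : α * μv * (K * βv * vc ^ 2 * (α - δ * Ep) - δ) /
          (K * βv ^ 2 * vc ^ 2 * (α - δ * Ep) ^ 2) ≤ 0 :=
          div_nonpos_of_nonpos_of_nonneg hc hD.le
        linarith
      nlinarith [mul_pos hα hμ]
    · intro h
      apply div_pos _ hD
      have h1 : 0 < K * βv * vc ^ 2 * (α - δ * Ep) - δ := by nlinarith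
      positivity
  · constructor
    · rintro ⟨hS, hP⟩
      rw [hPstar] at hP
      have hnum : K * βv * vc ^ 2 * (α - δ * Ep) - δ = 0 := by
        rcases div_eq_zero_iff.mp hP with h | h
        · rcases mul_eq_zero.mp h with h | h
          · exact absurd h (by positivity : α * μv ≠ 0)
          · exact h
        · exact absurd h hD.ne'
      rw [eq_div_iff hKβA.ne']
      nlinarith
    · intro h
      have hδ' : δ = vc ^ 2 * (K * βv * (α - δ * Ep)) :=
        (div_eq_iff hKβA.ne').mp h.symm
      constructor
      · rw [hSstar, div_eq_iff (by positivity : (βv * vc * (α - δ * Ep)) ≠ 0)]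
        linear_combination hδ'
      · rw [hPstar]
        have h0 : K * βv * vc ^ 2 * (α - δ * Ep) - δ = 0 := by linear_combination -hδ'
        rw [h0, mul_zero, zero_div]
end
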